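/- (Sample complexity corollary) Under the assumptions of Theorem 4.3, for any ε > 0 and δ ∈ (0,1), if R ≥ (8/ε²)·(2dM·log(1 + 16γ/ε) + log(2/δ)), then with probability at least 1 - δ, sup_{x,y∈X} |k(x,y) - k̃(x,y)| ≤ ε. -/

import Mathlib

/-!
Take an `r`-net `E` of `X` with `r = ε / (8γ)`, so that `|E| ≤ (1 + 16γ/ε)^(dM)`. The feature
`z ↦ exp (-γ (d(x,z) + d(z,y)))` takes values in `[0, 1]` and is `γ`-Lipschitz in `(x, y)`
uniformly in `z`, so both `k` and its empirical average `k̃` move by at most `ε/4` when `x` and `y`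
are replaced by nearby net points. For each of the `|E|²` pairs of net points, Hoeffding's
inequality bounds the probability of `|k̃ - k| ≥ ε/2` by `2 exp (-Rε²/2)`, and the hypothesis on `R`
makes the union bound over all pairs at most `δ`.
-/

open MeasureTheory ProbabilityTheory

lemma abs_exp_sub_exp_le_of_nonpos {a b : ℝ} (ha : a ≤ 0) (hb : b ≤ 0) :
    |Real.exp a - Real.exp b| ≤ |a - b| := by
  wlog hab : a ≤ b generalizing a b
  · rw [abs_sub_comm, abs_sub_comm a]; exact this hb ha (le_of_not_ge hab)
  have hexp : Real.exp (a - b) ≤ 1 := Real.exp_le_one_iff.2 (by linarith)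
  rw [abs_of_nonpos (sub_nonpos.2 (Real.exp_le_exp.2 hab)), abs_of_nonpos (by linarith)]
  calc -(Real.exp a - Real.exp b) = Real.exp b * (1 - Real.exp (a - b)) := by
        rw [mul_sub, ← Real.exp_add]; ring_nf
    _ ≤ 1 * -(a - b) := by
        refine mul_le_mul (Real.exp_le_one_iff.2 hb) ?_ (by linarith) zero_le_one
        linarith [Real.add_one_le_exp (a - b)]
    _ = -(a - b) := one_mul _

noncomputable def rgeFeature {X : Type*} [PseudoMetricSpace X] (γ : ℝ) (x y z : X) : ℝ :=
  Real.exp (-γ * (dist x z + dist z y))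

section rgeFeature

variable {X : Type*} [PseudoMetricSpace X] {γ : ℝ}

lemma rgeFeature_mem_Icc (hγ : 0 ≤ γ) (x y z : X) : rgeFeature γ x y z ∈ Set.Icc 0 1 :=
  ⟨(Real.exp_pos _).le, Real.exp_le_one_iff.2 (by
    have := add_nonneg (dist_nonneg (x := x) (y := z)) (dist_nonneg (x := z) (y := y))
    nlinarith)⟩

@[fun_prop]
lemma continuous_rgeFeature (γ : ℝ) (x y : X) : Continuous (rgeFeature γ x y) := by
  unfold rgeFeature; fun_prop

lemma abs_rgeFeature_sub_le (hγ : 0 ≤ γ) (x y x' y' z : X) :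
    |rgeFeature γ x y z - rgeFeature γ x' y' z| ≤ γ * (dist x x' + dist y y') := by
  have hpath : ∀ u v : X, -γ * (dist u z + dist z v) ≤ 0 := fun u v => by
    have := add_nonneg (dist_nonneg (x := u) (y := z)) (dist_nonneg (x := z) (y := v))
    nlinarith
  refine (abs_exp_sub_exp_le_of_nonpos (hpath x y) (hpath x' y')).trans ?_
  rw [← mul_sub, abs_mul, abs_neg, abs_of_nonneg hγ]
  gcongr
  calc |dist x z + dist z y - (dist x' z + dist z y')|
      ≤ |dist x z - dist x' z| + |dist z y - dist z y'| := by
        rw [add_sub_add_comm]; exact abs_add_le _ _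
    _ ≤ dist x x' + dist y y' := by
        rw [dist_comm z y, dist_comm z y']
        exact add_le_add (abs_dist_sub_le x x' z) (abs_dist_sub_le y y' z)

lemma integrable_rgeFeature [MeasurableSpace X] [OpensMeasurableSpace X] (hγ : 0 ≤ γ)
    (μ : Measure X) [IsFiniteMeasure μ] (x y : X) : Integrable (rgeFeature γ x y) μ :=
  Integrable.of_mem_Icc 0 1 (continuous_rgeFeature γ x y).aemeasurable
    (ae_of_all μ (rgeFeature_mem_Icc hγ x y))

end rgeFeature

lemma abs_integral_sub_integral_le {X : Type*} [MeasurableSpace X] {μ : Measure X}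
    [IsProbabilityMeasure μ] {f g : X → ℝ} (hf : Integrable f μ) (hg : Integrable g μ) {C : ℝ}
    (hfg : ∀ z, |f z - g z| ≤ C) :
    |∫ z, f z ∂μ - ∫ z, g z ∂μ| ≤ C := by
  rw [← integral_sub hf hg]
  simpa using norm_integral_le_of_norm_le_const (μ := μ) (f := fun z => f z - g z)
    (ae_of_all _ hfg)

lemma abs_mean_sub_mean_le {n : ℕ} [NeZero n] {f g : Fin n → ℝ} {C : ℝ}
    (hfg : ∀ i, |f i - g i| ≤ C) :
    |1 / (n : ℝ) * ∑ i, f i - 1 / (n : ℝ) * ∑ i, g i| ≤ C := by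
  have hn : (0 : ℝ) < n := Nat.cast_pos.2 (Nat.pos_of_ne_zero (NeZero.ne n))
  rw [← mul_sub, ← Finset.sum_sub_distrib, abs_mul, abs_of_pos (by positivity)]
  calc 1 / (n : ℝ) * |∑ i, (f i - g i)| ≤ 1 / (n : ℝ) * ∑ _i : Fin n, C := by
        gcongr
        exact (Finset.abs_sum_le_sum_abs _ _).trans (Finset.sum_le_sum fun i _ => hfg i)
    _ = C := by simp [field]

lemma ProbabilityTheory.HasSubgaussianMGF.measureReal_le_abs_le {Ω : Type*} [MeasurableSpace Ω]
    {P : Measure Ω} {Y : Ω → ℝ} {c : NNReal} (h : HasSubgaussianMGF Y c P) {t : ℝ} (ht : 0 ≤ t) :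
    P.real {ω | t ≤ |Y ω|} ≤ 2 * Real.exp (-t ^ 2 / (2 * c)) := by
  have hsplit : {ω | t ≤ |Y ω|} = {ω | t ≤ Y ω} ∪ {ω | t ≤ (-Y) ω} := by
    ext ω; simp [le_abs]
  rw [hsplit, two_mul]
  exact (measureReal_union_le _ _).trans
    (add_le_add (h.measure_ge_le ht) (h.neg.measure_ge_le ht))

lemma measureReal_le_abs_mean_sub_le {Ω : Type*} [MeasurableSpace Ω] {P : Measure Ω}
    [IsProbabilityMeasure P] {n : ℕ} [NeZero n] {Y : Fin n → Ω → ℝ} (hind : iIndepFun Y P)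
    (hmeas : ∀ i, Measurable (Y i)) (hY : ∀ i ω, Y i ω ∈ Set.Icc 0 1) {m : ℝ}
    (hm : ∀ i, P[Y i] = m) {t : ℝ} (ht : 0 ≤ t) :
    P.real {ω | t ≤ |1 / (n : ℝ) * ∑ i, Y i ω - m|} ≤ 2 * Real.exp (-2 * n * t ^ 2) := by
  have hn : (0 : ℝ) < n := Nat.cast_pos.2 (Nat.pos_of_ne_zero (NeZero.ne n))
  have hsubG : ∀ i ∈ Finset.univ, HasSubgaussianMGF (fun ω => Y i ω - m) (1 / 4) P := by
    intro i _
    have := hasSubgaussianMGF_of_mem_Icc (hmeas i).aemeasurable (ae_of_all P (hY i))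
    rw [hm i] at this
    convert this
    norm_num
  have hsum := HasSubgaussianMGF.sum_of_iIndepFun
    (hind.comp (fun _ y => y - m) fun _ => measurable_sub_const m) hsubG
  have hevent : {ω | t ≤ |1 / (n : ℝ) * ∑ i, Y i ω - m|} = {ω | n * t ≤ |∑ i, (Y i ω - m)|} := by
    ext ω
    simp only [Set.mem_ofPred_eq, Finset.sum_sub_distrib, Finset.sum_const, Finset.card_univ,
      Fintype.card_fin, nsmul_eq_mul]
    rw [show 1 / (n : ℝ) * ∑ i, Y i ω - m = (∑ i, Y i ω - n * m) / n by field_simp,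
      abs_div, abs_of_pos hn, le_div_iff₀' hn]
  rw [hevent]
  refine (hsum.measureReal_le_abs_le (by positivity)).trans_eq ?_
  simp only [Finset.sum_const, Finset.card_univ, Fintype.card_fin, nsmul_eq_mul]
  push_cast
  congr 2
  field_simp
  ring

lemma measureReal_le_abs_sampleMean_sub_integral_le {X Ω : Type*} [MeasurableSpace X]
    [MeasurableSpace Ω] {μ : Measure X} {P : Measure Ω} [IsProbabilityMeasure P] {n : ℕ}
    [NeZero n] {W : Fin n → Ω → X} (hW : ∀ i, Measurable (W i)) (hind : iIndepFun W P)
    (hid : ∀ i, P.map (W i) = μ) {f : X → ℝ} (hf : Measurable f)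
    (hf01 : ∀ x, f x ∈ Set.Icc 0 1) {t : ℝ} (ht : 0 ≤ t) :
    P.real {ω | t ≤ |1 / (n : ℝ) * ∑ i, f (W i ω) - ∫ x, f x ∂μ|} ≤
      2 * Real.exp (-2 * n * t ^ 2) := by
  refine measureReal_le_abs_mean_sub_le (Y := fun i => f ∘ W i) (hind.comp _ fun _ => hf)
    (fun i => hf.comp (hW i)) (fun i ω => hf01 _) (fun i => ?_) ht
  rw [← hid i, integral_map (hW i).aemeasurable hf.aestronglyMeasurable]
  rfl

lemma abs_sub_le_of_forall_exists_dist_le {X : Type*} [PseudoMetricSpace X] {F G : X → X → ℝ}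
    {E : Set X} {L r η : ℝ} (hL : 0 ≤ L)
    (hF : ∀ x y x' y', |F x y - F x' y'| ≤ L * (dist x x' + dist y y'))
    (hG : ∀ x y x' y', |G x y - G x' y'| ≤ L * (dist x x' + dist y y'))
    (hE : ∀ x, ∃ e ∈ E, dist x e ≤ r) (hFG : ∀ e ∈ E, ∀ e' ∈ E, |F e e' - G e e'| ≤ η)
    (x y : X) :
    |F x y - G x y| ≤ η + 4 * L * r := by
  obtain ⟨e, he, hxe⟩ := hE x
  obtain ⟨e', he', hye'⟩ := hE y
  have hnear : L * (dist x e + dist y e') ≤ 2 * L * r := by nlinarith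
  have hG' := hG e e' x y
  rw [dist_comm e, dist_comm e'] at hG'
  calc |F x y - G x y| ≤ |F x y - F e e'| + |F e e' - G e e'| + |G e e' - G x y| := by
        simpa only [Real.dist_eq] using dist_triangle4 (F x y) (F e e') (G e e') (G x y)
    _ ≤ η + 4 * L * r := by linarith [hF x y e e', hFG e he e' he']

lemma sq_mul_two_mul_exp_le {N A ε δ R : ℝ} {n : ℕ} (hN : 0 ≤ N) (hNA : N ≤ A ^ n) (hA : 1 ≤ A)
    (hε : 0 < ε) (hδ : 0 < δ) (hR0 : 0 ≤ R)
    (hR : 8 / ε ^ 2 * (2 * n * Real.log A + Real.log (2 / δ)) ≤ R) :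
    N ^ 2 * (2 * Real.exp (-2 * R * (ε / 2) ^ 2)) ≤ δ := by
  set x := n * Real.log A
  have hR' : 2 * x + Real.log (2 / δ) ≤ R * ε ^ 2 / 8 := by
    rw [div_mul_eq_mul_div, div_le_iff₀ (by positivity)] at hR
    linarith
  have hNx : N ≤ Real.exp x := by
    rwa [Real.exp_nat_mul, Real.exp_log (by linarith)]
  calc N ^ 2 * (2 * Real.exp (-2 * R * (ε / 2) ^ 2))
      ≤ Real.exp x ^ 2 * (2 * Real.exp (-(2 * x + Real.log (2 / δ)))) := by
        gcongr
        nlinarith [mul_nonneg hR0 (sq_nonneg ε)]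
    _ = δ := by
        rw [neg_add, Real.exp_add, Real.exp_neg (Real.log _), Real.exp_log (by positivity),
          Real.exp_neg, show Real.exp (2 * x) = Real.exp x ^ 2 by rw [sq, ← Real.exp_add, two_mul]]
        field_simp

lemma ofReal_one_sub_le_measure_compl {α : Type*} [MeasurableSpace α] {μ : Measure α}
    [IsProbabilityMeasure μ] {s : Set α} {δ : ℝ} (hs : μ.real s ≤ δ) :
    ENNReal.ofReal (1 - δ) ≤ μ sᶜ := by
  have hcover := measure_univ_le_add_compl s (μ := μ)
  rw [measure_univ] at hcover
  calc ENNReal.ofReal (1 - δ) ≤ ENNReal.ofReal (1 - μ.real s) :=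
        ENNReal.ofReal_le_ofReal (by linarith)
    _ = 1 - μ s := by
        rw [ENNReal.ofReal_sub _ measureReal_nonneg, ENNReal.ofReal_one, ofReal_measureReal]
    _ ≤ μ sᶜ := tsub_le_iff_left.2 hcover

theorem stmt_16 {X : Type*} [MetricSpace X] [MeasurableSpace X] [OpensMeasurableSpace X]
    (d M : ℕ)
    (hcover : ∀ ε : ℝ, 0 < ε → ∃ E : Finset X,
      (E.card : ℝ) ≤ (1 + 2 / ε) ^ (d * M) ∧ ∀ x : X, ∃ e ∈ E, dist x e ≤ ε)
    (μ : Measure X) [IsProbabilityMeasure μ] (γ : ℝ) (hγ : 0 < γ)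
    {Ω : Type*} [MeasureSpace Ω] [IsProbabilityMeasure (ℙ : Measure Ω)]
    (R : ℕ) (W : Fin R → Ω → X) (hWmeas : ∀ i, Measurable (W i))
    (hindep : iIndepFun W ℙ)
    (hid : ∀ i, Measure.map (W i) ℙ = μ)
    (k : X → X → ℝ)
    (hk : ∀ x y, k x y = ∫ ω, Real.exp (-γ * (dist x ω + dist ω y)) ∂μ)
    (ktil : Ω → X → X → ℝ)
    (hktil : ∀ ω' x y, ktil ω' x y =
      (1 / (R : ℝ)) * ∑ i, Real.exp (-γ * (dist x (W i ω') + dist (W i ω') y)))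
    (ε δ : ℝ) (hε : 0 < ε) (hδ : δ ∈ Set.Ioo (0 : ℝ) 1)
    (hR : (8 / ε ^ 2) * (2 * (d : ℝ) * M * Real.log (1 + 16 * γ / ε) +
      Real.log (2 / δ)) ≤ (R : ℝ)) :
    ENNReal.ofReal (1 - δ) ≤ ℙ {ω' | ∀ x y : X, |k x y - ktil ω' x y| ≤ ε} := by
  obtain ⟨hδ0, hδ1⟩ := hδ
  have hA : 1 ≤ 1 + 16 * γ / ε := le_add_of_nonneg_right (by positivity)
  have hRpos : 0 < R := by
    have hlogδ := Real.log_pos (show (1 : ℝ) < 2 / δ by rw [lt_div_iff₀ hδ0]; linarith)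
    have hlogA := Real.log_nonneg hA
    exact_mod_cast (by positivity : (0 : ℝ) < _).trans_le hR
  have : NeZero R := ⟨hRpos.ne'⟩
  obtain ⟨E, hEcard, hE⟩ := hcover (ε / (8 * γ)) (by positivity)
  rw [show 1 + 2 / (ε / (8 * γ)) = 1 + 16 * γ / ε by field_simp; ring] at hEcard
  let Bad := ⋃ p ∈ E ×ˢ E, {ω | ε / 2 ≤ |ktil ω p.1 p.2 - k p.1 p.2|}
  have hBad : (ℙ : Measure Ω).real Bad ≤ δ := by
    calc _ ≤ ∑ p ∈ E ×ˢ E, 2 * Real.exp (-2 * R * (ε / 2) ^ 2) := by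
          refine (measureReal_biUnion_finset_le _ _).trans (Finset.sum_le_sum fun p _ => ?_)
          simp only [hktil, hk]
          exact measureReal_le_abs_sampleMean_sub_integral_le hWmeas hindep hid
            (continuous_rgeFeature γ p.1 p.2).measurable (rgeFeature_mem_Icc hγ.le p.1 p.2)
            (by positivity)
      _ ≤ δ := by
          rw [Finset.sum_const, Finset.card_product, nsmul_eq_mul, Nat.cast_mul, ← sq]
          exact sq_mul_two_mul_exp_le (by positivity) hEcard hA hε hδ0 R.cast_nonneg
            (by push_cast; linarith)
  refine (ofReal_one_sub_le_measure_compl hBad).trans (measure_mono fun ω hω x y => ?_)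
  simp only [Bad, Set.mem_compl_iff, Set.mem_iUnion, not_exists] at hω
  refine (abs_sub_le_of_forall_exists_dist_le hγ.le (fun x y x' y' => ?_) (fun x y x' y' => ?_)
    hE (fun e he e' he' => ?_) x y).trans_eq (show ε / 2 + 4 * γ * (ε / (8 * γ)) = ε by
      field_simp; ring)
  · rw [hk, hk]
    exact abs_integral_sub_integral_le (integrable_rgeFeature hγ.le μ x y)
      (integrable_rgeFeature hγ.le μ x' y') (abs_rgeFeature_sub_le hγ.le x y x' y')
  · rw [hktil, hktil]
    exact abs_mean_sub_mean_le fun i => abs_rgeFeature_sub_le hγ.le x y x' y' (W i ω)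
  · rw [abs_sub_comm]
    exact (not_le.1 (hω (e, e') (Finset.mem_product.2 ⟨he, he'⟩))).le
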